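/- The conflict relation # on g-events is hereditary with respect to causality: if γ # γ' and γ' ≤ γ'', then γ # γ''. -/

import Mathlib

structure Comm (P L : Type) where
  sender : P
  receiver : P
  label : L

def play {P L : Type} (α : Comm P L) : Set P := {α.sender, α.receiver}

abbrev Trace (P L : Type) := List (Comm P L)

def playT {P L : Type} : Trace P L → Set P
  | [] => ∅
  | α :: σ => play α ∪ playT σ

/-- Permutation equivalence: least equivalence relation swapping adjacent
communications with disjoint participant sets. -/
inductive PermEq {P L : Type} : Trace P L → Trace P L → Prop
  | swap (σ σ' : Trace P L) (α α' : Comm P L) (h : play α ∩ play α' = ∅) :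
      PermEq (σ ++ α :: α' :: σ') (σ ++ α' :: α :: σ')
  | refl (σ : Trace P L) : PermEq σ σ
  | symm {σ σ' : Trace P L} : PermEq σ σ' → PermEq σ' σ
  | trans {σ σ' σ'' : Trace P L} : PermEq σ σ' → PermEq σ' σ'' → PermEq σ σ''

/-- A non-empty trace is pointed if every communication except the last shares
a participant with some later communication in the trace. -/
def IsPointed {P L : Type} (σ : Trace P L) : Prop :=
  σ ≠ [] ∧ ∀ i (hi : i + 1 < σ.length),
    ∃ j, i < j ∧ ∃ hj : j < σ.length,
      (play (σ.get ⟨i, by omega⟩) ∩ play (σ.get ⟨j, hj⟩)).Nonempty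

instance permSetoid (P L : Type) : Setoid (Trace P L) :=
  ⟨PermEq, ⟨PermEq.refl, PermEq.symm, PermEq.trans⟩⟩

/-- G-events live in the quotient of traces by permutation equivalence. -/
abbrev GEvent (P L : Type) := Quotient (permSetoid P L)

/-- A g-event proper is the class of a pointed trace. -/
def IsGEvent {P L : Type} (γ : GEvent P L) : Prop :=
  ∃ σ : Trace P L, IsPointed σ ∧ γ = ⟦σ⟧

open Classical in
/-- Causal prefixing on traces: prepend `α` iff its participants meet those of `σ`. -/
noncomputable def cpre {P L : Type} (α : Comm P L) (σ : Trace P L) : Trace P L :=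
  if (play α ∩ playT σ).Nonempty then α :: σ else σ

/-- `evFull σ` is (a canonical representative of) the g-event generated by `σ`. -/
noncomputable def evFull {P L : Type} : Trace P L → Trace P L
  | [] => []
  | [α] => [α]
  | α :: β :: σ => cpre α (evFull (β :: σ))

lemma playT_append {P L : Type} (σ τ : Trace P L) :
    playT (σ ++ τ) = playT σ ∪ playT τ := by
  induction σ with
  | nil => simp [playT]
  | cons α σ ih => simp [playT, ih, Set.union_assoc]

lemma PermEq.playT_eq {P L : Type} {σ σ' : Trace P L} (h : PermEq σ σ') :
    playT σ = playT σ' := by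
  induction h with
  | swap σ σ' α α' h =>
      simp [playT_append, playT, Set.union_left_comm, Set.union_comm, Set.union_assoc]
  | refl => rfl
  | symm _ ih => exact ih.symm
  | trans _ _ ih1 ih2 => exact ih1.trans ih2

lemma PermEq.cons {P L : Type} {σ σ' : Trace P L} (α : Comm P L) (h : PermEq σ σ') :
    PermEq (α :: σ) (α :: σ') := by
  induction h with
  | swap τ τ' β β' hd => exact PermEq.swap (α :: τ) τ' β β' hd
  | refl => exact PermEq.refl _
  | symm _ ih => exact ih.symm
  | trans _ _ ih1 ih2 => exact ih1.trans ih2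

/-- Causal prefixing of a g-event by a communication. -/
noncomputable def cprefix {P L : Type} (α : Comm P L) : GEvent P L → GEvent P L :=
  Quotient.map (cpre α) (by
    intro σ σ' h
    by_cases hc : (play α ∩ playT σ').Nonempty
    · show PermEq (cpre α σ) (cpre α σ')
      simpa [cpre, h.playT_eq, hc] using PermEq.cons α h
    · simpa [cpre, h.playT_eq, hc] using h)

/-- Causal prefixing of a g-event by a trace. -/
noncomputable def cprefixT {P L : Type} : Trace P L → GEvent P L → GEvent P L
  | [], γ => γ
  | α :: σ, γ => cprefix α (cprefixT σ γ)

/-- Causality on g-events. -/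
def GCause {P L : Type} (γ γ' : GEvent P L) : Prop :=
  ∃ σ σ' : Trace P L, γ = ⟦σ⟧ ∧ γ' = ⟦σ ++ σ'⟧

/-- Conflict on g-events. -/
def GConflict {P L : Type} (γ γ' : GEvent P L) : Prop :=
  ∃ (σ σ₁ σ₂ : Trace P L) (p q : P) (l₁ l₂ : L), l₁ ≠ l₂ ∧
    γ = ⟦σ ++ ⟨p, q, l₁⟩ :: σ₁⟧ ∧ γ' = ⟦σ ++ ⟨p, q, l₂⟩ :: σ₂⟧

lemma PermEq.append_right {P L : Type} {σ σ' : Trace P L} (τ : Trace P L)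
    (h : PermEq σ σ') : PermEq (σ ++ τ) (σ' ++ τ) := by
  induction h with
  | swap σ σ' α α' hd => simpa using PermEq.swap σ (σ' ++ τ) α α' hd
  | refl => exact PermEq.refl _
  | symm _ ih => exact ih.symm
  | trans _ _ ih1 ih2 => exact ih1.trans ih2

lemma mk_append_eq_mk_append {P L : Type} {σ σ' : Trace P L} (τ : Trace P L)
    (h : (⟦σ⟧ : GEvent P L) = ⟦σ'⟧) : (⟦σ ++ τ⟧ : GEvent P L) = ⟦σ' ++ τ⟧ :=
  Quotient.sound ((Quotient.exact h).append_right τ)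

theorem gconflict_hereditary_general {P L : Type} (γ γ' γ'' : GEvent P L)
    (hc : GConflict γ γ') (hle : GCause γ' γ'') : GConflict γ γ'' := by
  obtain ⟨σ, σ₁, σ₂, p, q, l₁, l₂, hne, hγ, hγ'⟩ := hc
  obtain ⟨τ, τ', rfl, rfl⟩ := hle
  refine ⟨σ, σ₁, σ₂ ++ τ', p, q, l₁, l₂, hne, hγ, ?_⟩
  simpa using mk_append_eq_mk_append τ' hγ'

/-- conflict is hereditary with respect to causality:
if γ # γ' and γ' ≤ γ'' then γ # γ''. -/
theorem gconflict_hereditary {P L : Type} (γ γ' γ'' : GEvent P L)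
    (h1 : IsGEvent γ) (h2 : IsGEvent γ') (h3 : IsGEvent γ'')
    (hc : GConflict γ γ') (hle : GCause γ' γ'') : GConflict γ γ'' :=
  gconflict_hereditary_general γ γ' γ'' hc hle
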